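/- arXiv:2409.03850 — 4 statements merged into one kernel-verified Lean document; each statement's English description precedes it below -/
import Mathlib

section
/- Let G be a connected graph and h a graph automorphism of G. Define the displacement function d_h(x) = d(x, h(x)) and the translation length |h| = min over vertices x of d_h(x). Let v be a vertex attaining the minimum, let α = (v = a_0, a_1, ..., a_{|h|} = h(v)) be a geodesic from v to h(v), and let γ : ℤ → V(G) be the bi-infinite path obtained by concatenating the paths h^n(α) for n ∈ ℤ. Then for all integers a, b with |a - b| ≤ |h|, we have d(γ(a), γ(b)) = |a - b|; that is, γ is an |h|-local geodesic. -/
/-!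
Since `γ (a + m) = h (γ a)` and consecutive points of `γ` are at distance at most one, for
`a ≤ b ≤ a + m` the triangle inequality gives
`m ≤ d(γ a, h (γ a)) ≤ d(γ a, γ b) + (a + m - b)`, i.e. `b - a ≤ d(γ a, γ b)`;
the reverse inequality holds because `γ` is `1`-Lipschitz.
-/

namespace SimpleGraph

variable {V W : Type*} {G : SimpleGraph V} {G' : SimpleGraph W}

lemma edist_map_le (f : G →g G') (u v : V) : G'.edist (f u) (f v) ≤ G.edist u v := by
  rw [edist_eq_sInf (G := G)]
  refine le_sInf (Set.forall_mem_range.mpr fun p => ?_)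
  exact (edist_le (p.map f)).trans_eq (by rw [Walk.length_map])

lemma Iso.edist_apply (e : G ≃g G') (u v : V) : G'.edist (e u) (e v) = G.edist u v :=
  le_antisymm (edist_map_le e.toHom u v) (by simpa using edist_map_le e.symm.toHom (e u) (e v))

lemma Iso.dist_apply (e : G ≃g G') (u v : V) : G'.dist (e u) (e v) = G.dist u v :=
  congrArg ENat.toNat (e.edist_apply u v)

lemma Iso.dist_zpow_apply (h : G ≃g G) (n : ℤ) (u v : V) :
    G.dist ((h.toEquiv ^ n) u) ((h.toEquiv ^ n) v) = G.dist u v := by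
  let toPerm : (G ≃g G) →* Equiv.Perm V :=
    { toFun := RelIso.toEquiv, map_one' := rfl, map_mul' := fun _ _ => rfl }
  have hpow : (h ^ n).toEquiv = h.toEquiv ^ n := map_zpow toPerm h n
  rw [← hpow]
  exact (h ^ n).dist_apply u v

lemma Connected.dist_add_le_of_dist_succ_le_one (hconn : G.Connected) {f : ℤ → V}
    (hstep : ∀ a, G.dist (f a) (f (a + 1)) ≤ 1) (a : ℤ) (k : ℕ) :
    G.dist (f a) (f (a + k)) ≤ k := by
  induction k with
  | zero => simp
  | succ k ih =>
    calc G.dist (f a) (f (a + (k + 1 : ℕ)))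
        ≤ G.dist (f a) (f (a + k)) + G.dist (f (a + k)) (f (a + k + 1)) := by
          rw [Nat.cast_succ, ← add_assoc]; exact hconn.dist_triangle
      _ ≤ k + 1 := add_le_add ih (hstep _)

lemma Connected.dist_eq_natAbs_of_map_add (hconn : G.Connected) {h : V → V} {m : ℕ}
    (hmin : ∀ x, m ≤ G.dist x (h x)) {f : ℤ → V}
    (hstep : ∀ a, G.dist (f a) (f (a + 1)) ≤ 1) (hper : ∀ a, f (a + m) = h (f a))
    (a b : ℤ) (hab : (a - b).natAbs ≤ m) : G.dist (f a) (f b) = (a - b).natAbs := by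
  have forward (a : ℤ) (k : ℕ) (hk : k ≤ m) : G.dist (f a) (f (a + k)) = k := by
    refine le_antisymm (hconn.dist_add_le_of_dist_succ_le_one hstep a k) ?_
    have hrest := hconn.dist_add_le_of_dist_succ_le_one hstep (a + k) (m - k)
    have hdisp : m ≤ G.dist (f a) (f (a + k)) + G.dist (f (a + k)) (f (a + k + (m - k : ℕ))) :=
      calc m ≤ G.dist (f a) (h (f a)) := hmin _
        _ = G.dist (f a) (f (a + k + (m - k : ℕ))) := by
          rw [← hper]; congr 2; push_cast [hk]; ring
        _ ≤ _ := hconn.dist_triangle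
    omega
  rcases le_total a b with hle | hle
  · obtain ⟨k, rfl⟩ := Int.le.dest hle
    rw [show (a - (a + k)).natAbs = k by omega]
    exact forward a k (by omega)
  · obtain ⟨k, rfl⟩ := Int.le.dest hle
    rw [show (b + k - b).natAbs = k by omega, dist_comm]
    exact forward b k (by omega)

end SimpleGraph

section Concatenation

variable {V : Type*} {G : SimpleGraph V} {h : G ≃g G} {m : ℕ} {α : ℕ → V} {γ : ℤ → V}

lemma Int.exists_eq_mul_add_of_pos {m : ℕ} (hm : 0 < m) (a : ℤ) :
    ∃ (n : ℤ) (i : ℕ), i < m ∧ a = n * m + i := by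
  have hm' : (0 : ℤ) < m := by exact_mod_cast hm
  have := Int.emod_nonneg a hm'.ne'
  have := Int.emod_lt_of_pos a hm'
  have := Int.ediv_mul_add_emod a m
  exact ⟨a / m, (a % m).toNat, by omega, by omega⟩

lemma concat_add_period (hm : 0 < m)
    (hγ : ∀ (n : ℤ) (i : ℕ), i ≤ m → γ (n * m + i) = (h.toEquiv ^ n) (α i)) (a : ℤ) :
    γ (a + m) = h (γ a) := by
  obtain ⟨n, i, hi, rfl⟩ := Int.exists_eq_mul_add_of_pos hm a
  rw [show n * m + i + m = (1 + n) * m + i by ring, hγ _ i hi.le, hγ n i hi.le, zpow_one_add]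
  rfl

lemma concat_dist_succ_le_one (hm : 0 < m)
    (hgeo : ∀ i j : ℕ, i ≤ j → j ≤ m → G.dist (α i) (α j) = j - i)
    (hγ : ∀ (n : ℤ) (i : ℕ), i ≤ m → γ (n * m + i) = (h.toEquiv ^ n) (α i)) (a : ℤ) :
    G.dist (γ a) (γ (a + 1)) ≤ 1 := by
  obtain ⟨n, i, hi, rfl⟩ := Int.exists_eq_mul_add_of_pos hm a
  have hγ' : γ (n * m + i + 1) = (h.toEquiv ^ n) (α (i + 1)) := by
    rw [← hγ n (i + 1) hi]; push_cast; ring_nf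
  rw [hγ n i hi.le, hγ', h.dist_zpow_apply, hgeo i (i + 1) (by omega) hi]
  omega

end Concatenation

theorem stmt0_general {V : Type*} (G : SimpleGraph V) (hconn : G.Connected)
    (h : G ≃g G) (m : ℕ) (hmpos : 0 < m)
    (hmin : ∀ x : V, m ≤ G.dist x (h x))
    (α : ℕ → V)
    (hgeo : ∀ i j : ℕ, i ≤ j → j ≤ m → G.dist (α i) (α j) = j - i)
    (γ : ℤ → V)
    (hγ : ∀ (n : ℤ) (i : ℕ), i ≤ m →
      γ (n * (m : ℤ) + (i : ℤ)) = (h.toEquiv ^ n) (α i)) :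
    ∀ a b : ℤ, (a - b).natAbs ≤ m → G.dist (γ a) (γ b) = (a - b).natAbs :=
  hconn.dist_eq_natAbs_of_map_add hmin (concat_dist_succ_le_one hmpos hgeo hγ)
    (concat_add_period hmpos hγ)

/-- the concatenation of h-translates of a geodesic from a
minimal-displacement vertex `v` to `h v` is an `|h|`-local geodesic. -/
theorem stmt0 {V : Type*} (G : SimpleGraph V) (hconn : G.Connected)
    (h : G ≃g G) (m : ℕ) (hmpos : 0 < m)
    (hmin : ∀ x : V, m ≤ G.dist x (h x))
    (v : V) (hv : G.dist v (h v) = m)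
    (α : ℕ → V) (hα0 : α 0 = v) (hαm : α m = h v)
    (hgeo : ∀ i j : ℕ, i ≤ j → j ≤ m → G.dist (α i) (α j) = j - i)
    (γ : ℤ → V)
    (hγ : ∀ (n : ℤ) (i : ℕ), i ≤ m →
      γ (n * (m : ℤ) + (i : ℤ)) = (h.toEquiv ^ n) (α i)) :
    ∀ a b : ℤ, (a - b).natAbs ≤ m → G.dist (γ a) (γ b) = (a - b).natAbs :=
  stmt0_general G hconn h m hmpos hmin α hgeo γ hγ
end

section
/- Let G be a weakly modular graph with no induced 4-cycles. Then there are no vertices u, z, y, x of G with z ~ y ~ x, d(z, x) = 2, and d(u, z) = d(u, x) = d(u, y) − 1 = k ≥ 1. -/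
/-- Triangle condition for weak modularity. -/
def TriangleCond {V : Type*} (G : SimpleGraph V) : Prop :=
  ∀ u v w : V, G.Adj v w → G.dist u v = G.dist u w → 1 < G.dist u v →
    ∃ x : V, G.Adj v x ∧ G.Adj w x ∧ G.dist u x = G.dist u v - 1

/-- Quadrangle condition for weak modularity. -/
def QuadCond {V : Type*} (G : SimpleGraph V) : Prop :=
  ∀ u v w z : V, G.Adj v z → G.Adj w z → G.dist v w = 2 →
    2 ≤ G.dist u v → G.dist u v = G.dist u w → G.dist u z = G.dist u v + 1 →
    ∃ x : V, G.Adj v x ∧ G.Adj w x ∧ G.dist u x = G.dist u v - 1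

/-- No induced (full) 4-cycle. -/
def NoInducedC4 {V : Type*} (G : SimpleGraph V) : Prop :=
  ¬ ∃ a b c e : V, G.Adj a b ∧ G.Adj b c ∧ G.Adj c e ∧ G.Adj e a ∧
      ¬ G.Adj a c ∧ ¬ G.Adj b e

/-- in a weakly modular graph without induced 4-cycles, there is
no configuration `z ~ y ~ x` with `d(z,x) = 2`, `d(u,z) = d(u,x) = k ≥ 1`
and `d(u,y) = k + 1`. -/
theorem stmt6 {V : Type*} (G : SimpleGraph V) (hconn : G.Connected)
    (hTC : TriangleCond G) (hQC : QuadCond G) (hC4 : NoInducedC4 G) :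
    ¬ ∃ (u z y x : V) (k : ℕ), 1 ≤ k ∧ G.Adj z y ∧ G.Adj y x ∧
        G.dist z x = 2 ∧ G.dist u z = k ∧ G.dist u x = k ∧
        G.dist u y = k + 1 := by
  rintro ⟨u, z, y, x, k, hk, hzy, hyx, hzx, huz, hux, huy⟩
  have hnzx : ¬ G.Adj z x := by
    intro h
    have := SimpleGraph.dist_eq_one_iff_adj.mpr h
    omega
  obtain ⟨s, hzs, hxs, hus⟩ : ∃ s, G.Adj z s ∧ G.Adj x s ∧ G.dist u s = k - 1 := by
    rcases Nat.lt_or_ge k 2 with hk2 | hk2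
    · have hk1 : k = 1 := by omega
      have h1 : G.Adj u z := SimpleGraph.dist_eq_one_iff_adj.mp (by omega)
      have h2 : G.Adj u x := SimpleGraph.dist_eq_one_iff_adj.mp (by omega)
      exact ⟨u, h1.symm, h2.symm, by simp [hk1]⟩
    · obtain ⟨s, hs1, hs2, hs3⟩ := hQC u z x y hzy hyx.symm hzx (by omega)
        (by omega) (by omega)
      exact ⟨s, hs1, hs2, by omega⟩
  have hys : G.Adj y s := by
    by_contra hny
    exact hC4 ⟨z, y, x, s, hzy, hyx, hxs, hzs.symm, hnzx, hny⟩
  have : G.dist u y ≤ G.dist u s + G.dist s y := hconn.dist_triangle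
  have hsy : G.dist s y = 1 := SimpleGraph.dist_eq_one_iff_adj.mpr hys.symm
  omega
end

section
/- Let X be a weakly systolic complex and h a simplicial automorphism with translation length |h| > 0. Let z ∈ Min_X(h) and suppose x₁, x₂ are vertices adjacent to z with x₁, x₂, z ∈ Min_X(h) and x₁ ~ x₂. Let γᵢ be geodesics from xᵢ to h(xᵢ) passing through z (i = 1, 2), i.e., d(xᵢ, z) = 1 and d(h(xᵢ), z) = |h| − 1. Then there exists a vertex a adjacent to both h(x₁) and h(x₂) with d(a, z) = |h| − 2, and a lies on a geodesic from z to h(z); hence a ∈ Min_X(h). -/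
lemma iso_dist_le {V : Type*} {G : SimpleGraph V} (hconn : G.Connected)
    (h : G ≃g G) (u v : V) : G.dist (h u) (h v) ≤ G.dist u v := by
  obtain ⟨p, hp⟩ := hconn.exists_walk_length_eq_dist u v
  calc G.dist (h u) (h v) ≤ (p.map h.toHom).length := SimpleGraph.dist_le _
    _ = p.length := p.length_map _
    _ = G.dist u v := hp

lemma iso_dist {V : Type*} {G : SimpleGraph V} (hconn : G.Connected)
    (h : G ≃g G) (u v : V) : G.dist (h u) (h v) = G.dist u v := by
  refine le_antisymm (iso_dist_le hconn h u v) ?_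
  have := iso_dist_le hconn h.symm (h u) (h v)
  simpa using this

/-- the triangle-condition step producing the apex `a` of the
extended 5-wheel: `a` is a common neighbor of `h(x₁)`, `h(x₂)` at distance
`|h| - 2` from `z`, lying on a geodesic from `z` to `h(z)`, hence in
`Min_X(h)`. -/
theorem stmt8 {V : Type*} (G : SimpleGraph V) (hconn : G.Connected)
    (hTC : TriangleCond G) (hQC : QuadCond G) (hC4 : NoInducedC4 G)
    (h : G ≃g G) (m : ℕ) (hm : 2 ≤ m)
    (hlb : ∀ x : V, m ≤ G.dist x (h x))
    (z x₁ x₂ : V)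
    (hz : G.dist z (h z) = m)
    (hx₁ : G.dist x₁ (h x₁) = m) (hx₂ : G.dist x₂ (h x₂) = m)
    (hzx₁ : G.Adj z x₁) (hzx₂ : G.Adj z x₂) (hx₁x₂ : G.Adj x₁ x₂)
    (hgz₁ : G.dist (h x₁) z = m - 1) (hgz₂ : G.dist (h x₂) z = m - 1) :
    ∃ a : V, G.Adj a (h x₁) ∧ G.Adj a (h x₂) ∧ G.dist a z = m - 2 ∧
      G.dist z a + G.dist a (h z) = m ∧ G.dist a (h a) = m := by
  rcases eq_or_lt_of_le hm with hm2 | hm3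
  · -- m = 2, take a = z
    refine ⟨z, ?_, ?_, ?_, ?_, ?_⟩
    · exact (SimpleGraph.dist_eq_one_iff_adj.mp (by omega : G.dist (h x₁) z = 1)).symm
    · exact (SimpleGraph.dist_eq_one_iff_adj.mp (by omega : G.dist (h x₂) z = 1)).symm
    · simp [SimpleGraph.dist_self]; omega
    · simp [SimpleGraph.dist_self, hz]
    · exact hz
  · obtain ⟨a, ha₁, ha₂, hda⟩ := hTC z (h x₁) (h x₂) (h.map_adj_iff.mpr hx₁x₂)
      (by rw [SimpleGraph.dist_comm, hgz₁, SimpleGraph.dist_comm (u := z), hgz₂])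
      (by rw [SimpleGraph.dist_comm, hgz₁]; omega)
    have hc1 : G.dist z (h x₁) = m - 1 := by rw [SimpleGraph.dist_comm]; exact hgz₁
    rw [hc1] at hda
    have hza : G.dist z a = m - 2 := by omega
    have haz2 : G.dist a (h z) = 2 := by
      have hub : G.dist a (h z) ≤ 2 := by
        calc G.dist a (h z) ≤ G.dist a (h x₁) + G.dist (h x₁) (h z) :=
              hconn.dist_triangle
          _ ≤ 1 + 1 := by
              have h1 : G.dist a (h x₁) = 1 := SimpleGraph.dist_eq_one_iff_adj.mpr ha₁.symm
              have h2 : G.dist (h x₁) (h z) = 1 := by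
                rw [iso_dist hconn h]
                exact SimpleGraph.dist_eq_one_iff_adj.mpr hzx₁.symm
              omega
      have hlbb : m ≤ G.dist z a + G.dist a (h z) := hz ▸ hconn.dist_triangle
      omega
    refine ⟨a, ha₁.symm, ha₂.symm, by rw [SimpleGraph.dist_comm]; exact hza, by omega, ?_⟩
    have hub : G.dist a (h a) ≤ m := by
      calc G.dist a (h a) ≤ G.dist a (h z) + G.dist (h z) (h a) := hconn.dist_triangle
        _ = 2 + G.dist z a := by rw [haz2, iso_dist hconn h]
        _ = m := by omega
    exact le_antisymm hub (hlb a)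
end

section
/- Let G be a weakly modular graph with no induced 4-cycle. Suppose vertices v, y, w, h' satisfy: d(v, w) = 2, y ~ v, y ~ w, and d(v, h') = d(w, h') = k + 1 while d(y, h') = k + 2 for some k ≥ 1. Then a contradiction arises; i.e., this configuration is impossible. Formally: if d(v,w) = 2, v ~ y ~ w, and d(v,h') = d(w,h') = k+1, then d(y,h') ≤ k+1. -/
/-- in a weakly modular graph without induced 4-cycles, if
`d(v,w) = 2`, `v ~ y ~ w` and `d(v,h') = d(w,h') = k + 1` with `k ≥ 1`,
then `d(y,h') ≤ k + 1`. -/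
theorem stmt11 {V : Type*} (G : SimpleGraph V) (hconn : G.Connected)
    (hTC : TriangleCond G) (hQC : QuadCond G) (hC4 : NoInducedC4 G)
    (v y w h' : V) (k : ℕ) (hk : 1 ≤ k)
    (hvw : G.dist v w = 2) (hvy : G.Adj v y) (hyw : G.Adj y w)
    (hv : G.dist v h' = k + 1) (hw : G.dist w h' = k + 1) :
    G.dist y h' ≤ k + 1 := by
  by_contra hcon
  push_neg at hcon
  -- d(y,h') ≤ d(y,v) + d(v,h') = k+2, so d(y,h') = k+2
  have htri : G.dist y h' ≤ G.dist y v + G.dist v h' :=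
    hconn.dist_triangle
  have hyv : G.dist y v = 1 := SimpleGraph.dist_eq_one_iff_adj.mpr hvy.symm
  have hyh : G.dist y h' = k + 2 := by
    omega
  -- apply quadrangle condition with u = h'
  have h1 : G.dist h' v = k + 1 := by rw [G.dist_comm]; exact hv
  have h2 : G.dist h' w = k + 1 := by rw [G.dist_comm]; exact hw
  have h3 : G.dist h' y = k + 2 := by rw [G.dist_comm]; exact hyh
  obtain ⟨s, hvs, hws, hhs⟩ := hQC h' v w y hvy hyw.symm hvw
    (by omega) (by omega) (by omega)
  -- no induced 4-cycle on v, y, w, s forces y ~ s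
  have hys : G.Adj y s := by
    by_contra hns
    exact hC4 ⟨v, y, w, s, hvy, hyw, hws, hvs.symm,
      fun h => by simp [SimpleGraph.dist_eq_one_iff_adj.mpr h] at hvw,
      hns⟩
  rw [h1] at hhs
  have hsh : G.dist s h' = k := by rw [G.dist_comm]; omega
  have : G.dist y h' ≤ G.dist y s + G.dist s h' := hconn.dist_triangle
  have hsy : G.dist y s = 1 := SimpleGraph.dist_eq_one_iff_adj.mpr hys
  omega
end
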